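/- arXiv:1906.08533 — 2 statements merged into one kernel-verified Lean document; each statement's English description precedes it below -/
import Mathlib

section
/- Let H be a finite-dimensional real inner product space and let γ be the standard Gaussian measure on H (the centered Gaussian measure whose covariance form is the inner product of H). Let Γ be a finite positive Borel measure on H such that ∫_H e^{⟨v, w⟩} dΓ(v) ≤ ∫_H e^{⟨v, w⟩} dγ(v) for every w ∈ H. Then for every positive semidefinite symmetric bilinear form B on H, setting q(v) := B(v, v)/2, one has ∫_H e^{q(v)} dΓ(v) ≤ ∫_H e^{q(v)} dγ(v) (as an inequality in [0, ∞]). -/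
/-!
Decompose the quadratic form as a sum of squares, `B v v = ∑ i ⟪u i, v⟫²`. By the Gaussian
moment generating function, `exp (B v v / 2) = ∫ exp ⟪v, ∑ i xᵢ • u i⟫ dγ(x)` for a standard
Gaussian vector `x`, so `exp (B v v / 2)` is a mixture of exponentials `exp ⟪v, w⟫`. Integrating
against `Γ` and swapping the integrals, the Laplace-transform domination at each `w` gives the
claim.
-/

open MeasureTheory
open scoped RealInnerProductSpace

noncomputable section

/-- The standard Gaussian measure on a finite-dimensional real inner product space `H`:
the centered Gaussian measure whose covariance form is the inner product of `H`,
i.e. the law of `Σ_i g_i e_i` for an orthonormal basis `(e_i)` of `H` and independent standard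
normal random variables `(g_i)`. -/
def stdGaussian (H : Type*) [NormedAddCommGroup H] [InnerProductSpace ℝ H]
    [MeasurableSpace H] [FiniteDimensional ℝ H] : Measure H :=
  Measure.map (fun a : Fin (Module.finrank ℝ H) → ℝ => ∑ i, a i • stdOrthonormalBasis ℝ H i)
    (Measure.pi fun _ => ProbabilityTheory.gaussianReal 0 1)

end

theorem stdGaussian_eq_probabilityTheory_stdGaussian {H : Type*} [NormedAddCommGroup H]
    [InnerProductSpace ℝ H] [MeasurableSpace H] [FiniteDimensional ℝ H] :
    stdGaussian H = ProbabilityTheory.stdGaussian H :=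
  rfl

theorem LinearMap.exists_sum_sq_inner_eq {H : Type*} [NormedAddCommGroup H]
    [InnerProductSpace ℝ H] [FiniteDimensional ℝ H] (B : H →ₗ[ℝ] H →ₗ[ℝ] ℝ)
    (hB_symm : ∀ v w, B v w = B w v) (hB_pos : ∀ v, 0 ≤ B v v) :
    ∃ (m : ℕ) (u : Fin m → H), ∀ v, B v v = ∑ i, ⟪u i, v⟫ ^ 2 := by
  set T := InnerProductSpace.continuousLinearMapOfBilin B.toContinuousBilinearMap
  have hT : ∀ v w, ⟪T v, w⟫ = B v w := InnerProductSpace.continuousLinearMapOfBilin_apply _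
  have hT_pos : T.IsPositive := by
    refine T.isPositive_iff.mpr ⟨fun v w => ?_, fun v => (hT v v).symm ▸ hB_pos v⟩
    rw [ContinuousLinearMap.coe_coe, real_inner_comm (T w), hT, hT, hB_symm]
  obtain ⟨m, u, hu⟩ := ContinuousLinearMap.isPositive_iff_eq_sum_rankOne.mp hT_pos
  refine ⟨m, u, fun v => ?_⟩
  simp [← hT, hu, sum_inner, real_inner_smul_left, sq]

namespace ProbabilityTheory

theorem lintegral_exp_gaussianReal (m : ℝ) (v : NNReal) :
    ∫⁻ x, ENNReal.ofReal (Real.exp x) ∂gaussianReal m v =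
      ENNReal.ofReal (Real.exp (m + v / 2)) := by
  have hmgf := congrFun (mgf_id_gaussianReal (μ := m) (v := v)) 1
  simp only [mgf, id, one_mul, one_pow, mul_one] at hmgf
  rw [← ofReal_integral_eq_lintegral_ofReal
    (by simpa using integrable_exp_mul_gaussianReal (μ := m) (v := v) 1)
    (Filter.Eventually.of_forall fun x => (Real.exp_pos x).le), hmgf]

theorem lintegral_exp_inner_stdGaussian {E : Type*} [NormedAddCommGroup E]
    [InnerProductSpace ℝ E] [FiniteDimensional ℝ E] [MeasurableSpace E] [BorelSpace E] (w : E) :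
    ∫⁻ x, ENNReal.ofReal (Real.exp ⟪x, w⟫) ∂stdGaussian E =
      ENNReal.ofReal (Real.exp (‖w‖ ^ 2 / 2)) := by
  have hmap := IsGaussian.map_eq_gaussianReal (μ := stdGaussian E) (innerSL ℝ w)
  rw [integral_strongDual_stdGaussian, variance_dual_stdGaussian, innerSL_apply_norm] at hmap
  simp_rw [real_inner_comm w, ← innerSL_apply_apply ℝ]
  rw [← lintegral_map (f := fun t => ENNReal.ofReal (Real.exp t)) (by fun_prop) (by fun_prop),
    hmap, lintegral_exp_gaussianReal, zero_add, Real.coe_toNNReal _ (sq_nonneg _)]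

theorem lintegral_exp_inner_sum_smul_stdGaussian {ι H : Type*} [Fintype ι]
    [NormedAddCommGroup H] [InnerProductSpace ℝ H] (u : ι → H) (v : H) :
    ∫⁻ x, ENNReal.ofReal (Real.exp ⟪v, ∑ i, x i • u i⟫) ∂stdGaussian (EuclideanSpace ℝ ι) =
      ENNReal.ofReal (Real.exp ((∑ i, ⟪u i, v⟫ ^ 2) / 2)) := by
  set y : EuclideanSpace ℝ ι := WithLp.toLp 2 fun i => ⟪u i, v⟫
  have hinner : ∀ x : EuclideanSpace ℝ ι, ⟪v, ∑ i, x i • u i⟫ = ⟪x, y⟫ := fun x => by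
    simp [y, inner_sum, real_inner_smul_right, PiLp.inner_apply, real_inner_comm, mul_comm]
  simp_rw [hinner, lintegral_exp_inner_stdGaussian, EuclideanSpace.real_norm_sq_eq, y]

end ProbabilityTheory

theorem MeasureTheory.lintegral_lintegral_le_of_forall_lintegral_le {α β : Type*}
    [MeasurableSpace α] [MeasurableSpace β] {μ ν : Measure α} [SFinite μ] [SFinite ν]
    {ρ : Measure β} [SFinite ρ] {f : α → β → ENNReal} (hf : Measurable (Function.uncurry f))
    (hle : ∀ y, ∫⁻ x, f x y ∂μ ≤ ∫⁻ x, f x y ∂ν) :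
    ∫⁻ x, ∫⁻ y, f x y ∂ρ ∂μ ≤ ∫⁻ x, ∫⁻ y, f x y ∂ρ ∂ν := by
  rw [lintegral_lintegral_swap hf.aemeasurable, lintegral_lintegral_swap hf.aemeasurable]
  exact lintegral_mono hle

/-- Let `γ` be the standard Gaussian measure on a finite-dimensional real inner
product space `H` and let `Γ` be a finite positive Borel measure on `H` whose Laplace transform
is dominated by that of `γ`. Then for every positive semidefinite symmetric bilinear form `B` on
`H`, with `q(v) = B(v,v)/2`, one has `∫ e^q dΓ ≤ ∫ e^q dγ` (in `[0, ∞]`). -/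
theorem integral_exp_quadratic_le_of_laplace_le
    {H : Type*} [NormedAddCommGroup H] [InnerProductSpace ℝ H]
    [MeasurableSpace H] [BorelSpace H] [FiniteDimensional ℝ H]
    (Γ : Measure H) [IsFiniteMeasure Γ]
    (hLaplace : ∀ w : H,
      ∫⁻ v, ENNReal.ofReal (Real.exp ⟪v, w⟫) ∂Γ ≤
        ∫⁻ v, ENNReal.ofReal (Real.exp ⟪v, w⟫) ∂(stdGaussian H))
    (B : H →ₗ[ℝ] H →ₗ[ℝ] ℝ) (hB_symm : ∀ v w : H, B v w = B w v)
    (hB_pos : ∀ v : H, 0 ≤ B v v) :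
    ∫⁻ v, ENNReal.ofReal (Real.exp (B v v / 2)) ∂Γ ≤
      ∫⁻ v, ENNReal.ofReal (Real.exp (B v v / 2)) ∂(stdGaussian H) := by
  obtain ⟨m, u, hBu⟩ := B.exists_sum_sq_inner_eq hB_symm hB_pos
  rw [stdGaussian_eq_probabilityTheory_stdGaussian] at hLaplace ⊢
  simp_rw [hBu, ← ProbabilityTheory.lintegral_exp_inner_sum_smul_stdGaussian u]
  exact lintegral_lintegral_le_of_forall_lintegral_le (by fun_prop) fun x => hLaplace _
end

section
/- For every ε > 0 and every λ ∈ (0, 1), Σ_{m=1}^∞ (λ^m / m) · Z(m(1+ε)) ≤ λ(1/ε + 1) − log(1 − λ), where Z(q) := Σ_{l=1}^∞ (2l+1)(l(l+1))^{−q} for q > 1. -/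
open Real

noncomputable section

/-- Convexity-type inequality for negative powers: for `0 < a ≤ b` and `p > 0`,
`(b - a) * b^(-(p+1)) ≤ (a^(-p) - b^(-p))/p`. -/
lemma key_convex {a b p : ℝ} (ha : 0 < a) (hab : a ≤ b) (hp : 0 < p) :
    (b - a) * b ^ (-(p + 1)) ≤ (a ^ (-p) - b ^ (-p)) / p := by
  have hb : 0 < b := lt_of_lt_of_le ha hab
  have hx : 0 < a / b := div_pos ha hb
  have hlog : Real.log (a / b) ≤ a / b - 1 := Real.log_le_sub_one_of_pos hx
  have hxp : (a / b) ^ (-p) = Real.exp (-p * Real.log (a / b)) := by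
    rw [Real.rpow_def_of_pos hx]; ring_nf
  have hexp := Real.add_one_le_exp (-p * Real.log (a / b))
  have h1 : 1 + p * (1 - a / b) ≤ (a / b) ^ (-p) := by
    rw [hxp]; nlinarith
  have hmul : a ^ (-p) = (a / b) ^ (-p) * b ^ (-p) := by
    rw [← Real.mul_rpow (le_of_lt hx) hb.le, div_mul_cancel₀ _ (ne_of_gt hb)]
  have hbp : (0:ℝ) < b ^ (-p) := Real.rpow_pos_of_pos hb _
  have hbq : b ^ (-(p+1)) = b ^ (-p) * b⁻¹ := by
    rw [show -(p+1) = -p + (-1) by ring, Real.rpow_add hb, Real.rpow_neg_one]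
  rw [hbq, le_div_iff₀ hp, hmul]
  have hr : 1 - a / b = (b - a) * b⁻¹ := by field_simp
  have h2 : (1 + p * ((b - a) * b⁻¹)) * b ^ (-p) ≤ (a / b) ^ (-p) * b ^ (-p) := by
    rw [← hr]; exact mul_le_mul_of_nonneg_right h1 hbp.le
  nlinarith [h2]

/-- Partial sums of the spectral zeta series are bounded by `2 + 1/(q-1)` for `q > 1`. -/
lemma sum_bound_C {q : ℝ} (hq : 1 < q) (N : ℕ) :
    ∑ n ∈ Finset.range N, (2 * ((n : ℝ) + 1) + 1) * (((n : ℝ) + 1) * ((n : ℝ) + 2)) ^ (-q)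
      ≤ 2 + 1 / (q - 1) := by
  have hq0 : 0 < q - 1 := by linarith
  set u : ℕ → ℝ := fun n => ((n:ℝ)+1)⁻¹ - ((n:ℝ)+2)⁻¹ with hu
  set G : ℕ → ℝ := fun n => (((n:ℝ)+1)*((n:ℝ)+2)) ^ (-(q-1)) with hG
  set v : ℕ → ℝ := fun n => match n with
    | 0 => 1
    | Nat.succ k => (G k - G (k+1))/(q-1) with hv
  have hGcast : ∀ k : ℕ, G (k+1) = (((k:ℝ)+2)*((k:ℝ)+3)) ^ (-(q-1)) := by
    intro k
    simp only [hG]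
    push_cast
    rw [show ((k:ℝ)+1+1) = (k:ℝ)+2 by ring, show ((k:ℝ)+1+2) = (k:ℝ)+3 by ring]
  have hterm : ∀ n : ℕ,
      (2 * ((n : ℝ) + 1) + 1) * (((n : ℝ) + 1) * ((n : ℝ) + 2)) ^ (-q) ≤ u n + v n := by
    intro n
    have hn0 : (0:ℝ) ≤ (n:ℝ) := Nat.cast_nonneg n
    have hx1 : (1:ℝ) ≤ ((n:ℝ)+1)*((n:ℝ)+2) := by nlinarith
    have hxq : (((n : ℝ) + 1) * ((n : ℝ) + 2)) ^ (-q) ≤ u n := by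
      have h1 : (((n : ℝ) + 1) * ((n : ℝ) + 2)) ^ (-q)
          ≤ (((n : ℝ) + 1) * ((n : ℝ) + 2)) ^ (-1 : ℝ) :=
        Real.rpow_le_rpow_of_exponent_le hx1 (by linarith)
      rw [Real.rpow_neg_one] at h1
      refine h1.trans (le_of_eq ?_)
      simp only [hu]
      have h2 : ((n:ℝ)+1) ≠ 0 := by positivity
      have h3 : ((n:ℝ)+2) ≠ 0 := by positivity
      field_simp
      ring
    have hmain : 2 * ((n : ℝ) + 1) * (((n : ℝ) + 1) * ((n : ℝ) + 2)) ^ (-q) ≤ v n := by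
      match n with
      | 0 =>
        have h2 : ((2:ℝ)) ^ (-q) ≤ (2:ℝ) ^ (-1:ℝ) :=
          Real.rpow_le_rpow_of_exponent_le (by norm_num) (by linarith)
        rw [Real.rpow_neg_one] at h2
        have hv0 : v 0 = 1 := rfl
        rw [hv0]
        push_cast
        rw [show ((0:ℝ)+1)*((0:ℝ)+2) = 2 by norm_num]
        nlinarith [h2]
      | Nat.succ k =>
        have hk0 : (0:ℝ) ≤ (k:ℝ) := Nat.cast_nonneg k
        have ha : (0:ℝ) < ((k:ℝ)+1)*((k:ℝ)+2) := by positivity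
        have hab : ((k:ℝ)+1)*((k:ℝ)+2) ≤ ((k:ℝ)+2)*((k:ℝ)+3) := by nlinarith
        have hkey := key_convex ha hab hq0
        rw [show -(q - 1 + 1) = -q by ring,
          show (((k:ℝ)+2)*((k:ℝ)+3)) - (((k:ℝ)+1)*((k:ℝ)+2)) = 2*((k:ℝ)+2) by ring] at hkey
        have hvs : v (k+1) = (G k - G (k+1))/(q-1) := rfl
        rw [hvs, hGcast k]
        have hG1 : G k = (((k:ℝ)+1)*((k:ℝ)+2)) ^ (-(q-1)) := rfl
        rw [hG1]
        push_cast
        rw [show ((k:ℝ)+1+1) = (k:ℝ)+2 by ring, show ((k:ℝ)+1+2) = (k:ℝ)+3 by ring]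
        exact hkey
    calc (2 * ((n : ℝ) + 1) + 1) * (((n : ℝ) + 1) * ((n : ℝ) + 2)) ^ (-q)
        = 2 * ((n : ℝ) + 1) * (((n : ℝ) + 1) * ((n : ℝ) + 2)) ^ (-q)
          + (((n : ℝ) + 1) * ((n : ℝ) + 2)) ^ (-q) := by ring
      _ ≤ v n + u n := add_le_add hmain hxq
      _ = u n + v n := by ring
  have hsumu : ∑ n ∈ Finset.range N, u n ≤ 1 := by
    have he : ∀ n : ℕ, u n = (fun m : ℕ => ((m:ℝ)+1)⁻¹) n - (fun m : ℕ => ((m:ℝ)+1)⁻¹) (n+1) := by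
      intro n; simp only [hu]; push_cast; ring
    rw [Finset.sum_congr rfl (fun n _ => he n), Finset.sum_range_sub']
    have h1 : (0:ℝ) ≤ ((N:ℝ)+1)⁻¹ := by positivity
    norm_num
    linarith
  have hsumv : ∑ n ∈ Finset.range N, v n ≤ 1 + 1/(q-1) := by
    match N with
    | 0 =>
      simp only [Finset.range_zero, Finset.sum_empty]
      positivity
    | Nat.succ M =>
      rw [Finset.sum_range_succ']
      have hv0 : v 0 = 1 := rfl
      have hvs : ∀ k : ℕ, v (k+1) = ((fun j => G j / (q-1)) k - (fun j => G j / (q-1)) (k+1)) := by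
        intro k; simp only [hv]; ring
      rw [hv0, Finset.sum_congr rfl (fun k _ => hvs k), Finset.sum_range_sub']
      have hG0 : G 0 ≤ 1 := by
        have he : G 0 = (2:ℝ) ^ (-(q-1)) := by simp only [hG]; norm_num
        rw [he]
        calc (2:ℝ) ^ (-(q-1)) ≤ (2:ℝ) ^ (0:ℝ) :=
              Real.rpow_le_rpow_of_exponent_le (by norm_num) (by linarith)
          _ = 1 := Real.rpow_zero 2
      have hGM : 0 ≤ G M := by simp only [hG]; positivity
      have h1 : G 0 / (q-1) ≤ 1 / (q-1) := by gcongr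
      have h2 : 0 ≤ G M / (q-1) := by positivity
      linarith
  calc ∑ n ∈ Finset.range N, (2 * ((n : ℝ) + 1) + 1) * (((n : ℝ) + 1) * ((n : ℝ) + 2)) ^ (-q)
      ≤ ∑ n ∈ Finset.range N, (u n + v n) := Finset.sum_le_sum (fun n _ => hterm n)
    _ = (∑ n ∈ Finset.range N, u n) + ∑ n ∈ Finset.range N, v n := Finset.sum_add_distrib
    _ ≤ 1 + (1 + 1/(q-1)) := add_le_add hsumu hsumv
    _ = 2 + 1/(q-1) := by ring

/-- Partial sums of the spectral zeta series are bounded by `1` for `q ≥ 2`. -/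
lemma sum_bound_D {q : ℝ} (hq : 2 ≤ q) (N : ℕ) :
    ∑ n ∈ Finset.range N, (2 * ((n : ℝ) + 1) + 1) * (((n : ℝ) + 1) * ((n : ℝ) + 2)) ^ (-q)
      ≤ 1 := by
  have hterm : ∀ n : ℕ,
      (2 * ((n : ℝ) + 1) + 1) * (((n : ℝ) + 1) * ((n : ℝ) + 2)) ^ (-q)
        ≤ (fun m : ℕ => (((m:ℝ)+1)^2)⁻¹) n - (fun m : ℕ => (((m:ℝ)+1)^2)⁻¹) (n+1) := by
    intro n
    have hn0 : (0:ℝ) ≤ (n:ℝ) := Nat.cast_nonneg n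
    have hx1 : (1:ℝ) ≤ ((n:ℝ)+1)*((n:ℝ)+2) := by nlinarith
    have h1 : (((n : ℝ) + 1) * ((n : ℝ) + 2)) ^ (-q)
        ≤ (((n : ℝ) + 1) * ((n : ℝ) + 2)) ^ (-2 : ℝ) :=
      Real.rpow_le_rpow_of_exponent_le hx1 (by linarith)
    have h2 : (((n : ℝ) + 1) * ((n : ℝ) + 2)) ^ (-2 : ℝ)
        = ((((n:ℝ)+1)*((n:ℝ)+2))^(2:ℕ))⁻¹ := by
      rw [← Real.rpow_natCast (((n:ℝ)+1)*((n:ℝ)+2)) 2, ← Real.rpow_neg (by positivity)]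
      norm_num
    have hc : (0:ℝ) < 2 * ((n : ℝ) + 1) + 1 := by linarith
    have h3 : (2 * ((n:ℝ)+1) + 1) * ((((n:ℝ)+1)*((n:ℝ)+2))^(2:ℕ))⁻¹
        = (((n:ℝ)+1)^2)⁻¹ - (((n:ℝ)+2)^2)⁻¹ := by
      have e1 : ((n:ℝ)+1) ≠ 0 := by positivity
      have e2 : ((n:ℝ)+2) ≠ 0 := by positivity
      field_simp
      ring
    calc (2 * ((n : ℝ) + 1) + 1) * (((n : ℝ) + 1) * ((n : ℝ) + 2)) ^ (-q)
        ≤ (2 * ((n : ℝ) + 1) + 1) * ((((n:ℝ)+1)*((n:ℝ)+2))^(2:ℕ))⁻¹ := by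
          rw [← h2]; exact mul_le_mul_of_nonneg_left h1 hc.le
      _ = (((n:ℝ)+1)^2)⁻¹ - (((n:ℝ)+2)^2)⁻¹ := h3
      _ = (fun m : ℕ => (((m:ℝ)+1)^2)⁻¹) n - (fun m : ℕ => (((m:ℝ)+1)^2)⁻¹) (n+1) := by
          push_cast
          ring
  calc ∑ n ∈ Finset.range N, (2 * ((n : ℝ) + 1) + 1) * (((n : ℝ) + 1) * ((n : ℝ) + 2)) ^ (-q)
      ≤ ∑ n ∈ Finset.range N,
          ((fun m : ℕ => (((m:ℝ)+1)^2)⁻¹) n - (fun m : ℕ => (((m:ℝ)+1)^2)⁻¹) (n+1)) :=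
        Finset.sum_le_sum (fun n _ => hterm n)
    _ = ((((0:ℕ):ℝ)+1)^2)⁻¹ - (((N:ℝ)+1)^2)⁻¹ := by rw [Finset.sum_range_sub']
    _ = 1 - (((N:ℝ)+1)^2)⁻¹ := by norm_num
    _ ≤ 1 := by
        have h1 : (0:ℝ) ≤ (((N:ℝ)+1)^2)⁻¹ := by positivity
        linarith

/-- The spectral zeta function `Z(q) = Tr(Δ_g^{−q}) = Σ_{l=1}^∞ (2l+1)(l(l+1))^{−q}` of the
Laplace–Beltrami operator on the unit two-sphere, whose positive eigenvalues are `l(l+1)` with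
multiplicity `2l+1`. -/
def specZeta (q : ℝ) : ℝ :=
  ∑' l : ℕ, (2 * ((l : ℝ) + 1) + 1) * (((l : ℝ) + 1) * ((l : ℝ) + 2)) ^ (-q)

lemma specZeta_nonneg (q : ℝ) : 0 ≤ specZeta q :=
  tsum_nonneg (fun n => by positivity)

lemma specZeta_le_C {q : ℝ} (hq : 1 < q) : specZeta q ≤ 2 + 1 / (q - 1) :=
  Real.tsum_le_of_sum_range_le (fun n => by positivity) (sum_bound_C hq)

lemma specZeta_le_one {q : ℝ} (hq : 2 ≤ q) : specZeta q ≤ 1 :=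
  Real.tsum_le_of_sum_range_le (fun n => by positivity) (sum_bound_D hq)

/-- For every `ε > 0` and every `λ ∈ (0,1)`,
`Σ_{m=1}^∞ (λ^m/m) Z(m(1+ε)) ≤ λ(1/ε + 1) − log(1 − λ)`. -/
theorem zeta_series_bound (ε : ℝ) (hε : 0 < ε) (lam : ℝ) (hlam0 : 0 < lam) (hlam1 : lam < 1) :
    Summable (fun m : ℕ => lam ^ (m + 1) / ((m : ℝ) + 1) * specZeta (((m : ℝ) + 1) * (1 + ε))) ∧
    ∑' m : ℕ, lam ^ (m + 1) / ((m : ℝ) + 1) * specZeta (((m : ℝ) + 1) * (1 + ε)) ≤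
      lam * (1 / ε + 1) - Real.log (1 - lam) := by
  set b : ℕ → ℝ :=
    fun m => lam ^ (m+1) / ((m:ℝ)+1) + (if m = 0 then lam * (1/ε + 1) else 0) with hb
  have hlog : HasSum (fun m : ℕ => lam ^ (m+1) / ((m:ℝ)+1)) (-Real.log (1 - lam)) :=
    Real.hasSum_pow_div_log_of_abs_lt_one (by rw [abs_of_pos hlam0]; exact hlam1)
  have hind : Summable (fun m : ℕ => if m = 0 then lam * (1/ε + 1) else 0) := by
    apply summable_of_ne_finset_zero (s := {0})
    intro m hm
    simp only [Finset.mem_singleton] at hm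
    simp [hm]
  have hbsum : Summable b := hlog.summable.add hind
  have htb : ∑' m, b m = -Real.log (1-lam) + lam * (1/ε + 1) := by
    rw [hb, Summable.tsum_add hlog.summable hind, hlog.tsum_eq, tsum_ite_eq]
  have hle : ∀ m : ℕ,
      lam ^ (m + 1) / ((m : ℝ) + 1) * specZeta (((m : ℝ) + 1) * (1 + ε)) ≤ b m := by
    intro m
    match m with
    | 0 =>
      have he : (((0:ℕ):ℝ) + 1) * (1 + ε) = 1 + ε := by norm_num
      have hZ : specZeta ((((0:ℕ):ℝ) + 1) * (1 + ε)) ≤ 2 + 1/ε := by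
        rw [he]
        have := specZeta_le_C (q := 1 + ε) (by linarith)
        rw [show (1 + ε - 1) = ε by ring] at this
        exact this
      have hb0 : b 0 = lam ^ 1 / ((0:ℝ)+1) + lam * (1/ε + 1) := by simp [hb]
      have hZ0 : 0 ≤ specZeta ((((0:ℕ):ℝ) + 1) * (1 + ε)) := specZeta_nonneg _
      calc lam ^ (0 + 1) / (((0:ℕ) : ℝ) + 1) * specZeta ((((0:ℕ):ℝ) + 1) * (1 + ε))
          = lam * specZeta ((((0:ℕ):ℝ) + 1) * (1 + ε)) := by norm_num
        _ ≤ lam * (2 + 1/ε) := mul_le_mul_of_nonneg_left hZ hlam0.le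
        _ = lam ^ 1 / ((0:ℝ)+1) + lam * (1/ε + 1) := by ring
        _ = b 0 := hb0.symm
    | Nat.succ k =>
      have hk0 : (0:ℝ) ≤ (k:ℝ) := Nat.cast_nonneg k
      have hq2 : (2:ℝ) ≤ (((k+1:ℕ):ℝ) + 1) * (1 + ε) := by
        push_cast
        nlinarith
      have hZ : specZeta ((((k+1:ℕ):ℝ) + 1) * (1 + ε)) ≤ 1 := specZeta_le_one hq2
      have hc : (0:ℝ) ≤ lam ^ (k+1+1) / (((k+1:ℕ):ℝ) + 1) := by positivity
      have hbx : b (k+1) = lam ^ (k+1+1) / (((k+1:ℕ):ℝ)+1) := by simp [hb]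
      rw [hbx]
      exact mul_le_of_le_one_right hc hZ
  have hnn : ∀ m : ℕ,
      0 ≤ lam ^ (m + 1) / ((m : ℝ) + 1) * specZeta (((m : ℝ) + 1) * (1 + ε)) := by
    intro m
    exact mul_nonneg (by positivity) (specZeta_nonneg _)
  have hsum : Summable
      (fun m : ℕ => lam ^ (m + 1) / ((m : ℝ) + 1) * specZeta (((m : ℝ) + 1) * (1 + ε))) :=
    Summable.of_nonneg_of_le hnn hle hbsum
  refine ⟨hsum, ?_⟩
  calc ∑' m : ℕ, lam ^ (m + 1) / ((m : ℝ) + 1) * specZeta (((m : ℝ) + 1) * (1 + ε))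
      ≤ ∑' m, b m := Summable.tsum_le_tsum hle hsum hbsum
    _ = -Real.log (1-lam) + lam * (1/ε + 1) := htb
    _ = lam * (1 / ε + 1) - Real.log (1 - lam) := by ring

end
end
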